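/- For the Gaussian model x̄ ~ N(θ, σ²/n) with point null θ = 0 and prior density π under the alternative that is continuous with π(0) = c_π ∈ (0, ∞) and bounded, the Bayes factor BF₀₁(x̄) = f(x̄ | 0) / ∫ f(x̄ | θ) π(θ) dθ satisfies: for any sequence x̄_n with |x̄_n| ≤ A√((log n)/n), BF₀₁(x̄_n) · (σ√(2π) c_π / √n) · exp(t_n²/2) → 1, where t_n = √n x̄_n/σ. -/

import Mathlib

/-!
Substituting `θ = x̄ + (σ/√n) u` turns the marginal likelihood `∫ f(x̄ | θ) π(θ) dθ` into the
expectation of `π(x̄ + (σ/√n) u)` under a standard Gaussian `u`. On the band `x̄_n → 0`, so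
dominated convergence (`π` is bounded and continuous) sends it to `π(0) = c_π`, while
`f(x̄ | 0) · σ√(2π)/√n · e^{t²/2} = 1` exactly.
-/

open Filter

/-- Sampling density of the mean `x̄ ~ N(θ, σ²/n)`. -/
noncomputable def meanDensity (σ : ℝ) (n : ℕ) (xbar θ : ℝ) : ℝ :=
  Real.sqrt n / (σ * Real.sqrt (2 * Real.pi)) *
    Real.exp (-(n : ℝ) * (xbar - θ) ^ 2 / (2 * σ ^ 2))

/-- Bayes factor in favour of `H₀ : θ = 0` against the mixture alternative with
prior density `p`. -/
noncomputable def BF01 (σ : ℝ) (p : ℝ → ℝ) (n : ℕ) (xbar : ℝ) : ℝ :=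
  meanDensity σ n xbar 0 / ∫ θ : ℝ, meanDensity σ n xbar θ * p θ

open Topology MeasureTheory ProbabilityTheory Real
open scoped NNReal

theorem tendsto_integral_comp_affine {α : Type*} {l : Filter α} [l.IsCountablyGenerated]
    (μ : Measure ℝ) [IsProbabilityMeasure μ] {p : ℝ → ℝ} (hp : Continuous p)
    (hbdd : ∃ B, ∀ x, |p x| ≤ B) {a s : α → ℝ} {a₀ : ℝ}
    (ha : Tendsto a l (𝓝 a₀)) (hs : Tendsto s l (𝓝 0)) :
    Tendsto (fun i => ∫ u, p (a i + s i * u) ∂μ) l (𝓝 (p a₀)) := by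
  obtain ⟨B, hB⟩ := hbdd
  have hlim : Tendsto (fun i => ∫ u, p (a i + s i * u) ∂μ) l (𝓝 (∫ _, p a₀ ∂μ)) := by
    refine tendsto_integral_filter_of_dominated_convergence (fun _ => B) ?_ ?_
      (integrable_const B) ?_
    · exact .of_forall fun i => (hp.comp (by fun_prop)).aestronglyMeasurable
    · exact .of_forall fun i => .of_forall fun u => hB _
    · refine .of_forall fun u => (hp.tendsto a₀).comp ?_
      simpa using ha.add (hs.mul_const u)
  simpa using hlim

theorem integral_gaussianReal_eq_integral_comp_affine {f : ℝ → ℝ} (x c : ℝ) {v : ℝ≥0}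
    (hv : (v : ℝ) = c ^ 2) (hf : AEStronglyMeasurable f (gaussianReal x v)) :
    ∫ θ, f θ ∂gaussianReal x v = ∫ u, f (x + c * u) ∂gaussianReal 0 1 := by
  have hmap : (gaussianReal 0 1).map (fun u => x + c * u) = gaussianReal x v := by
    rw [← Function.comp_def (x + ·) (c * ·),
      ← Measure.map_map (measurable_const_add x) (measurable_const_mul c),
      gaussianReal_map_const_mul, gaussianReal_map_const_add]
    congr
    · ring
    · ext; simp [hv]
  rw [← hmap] at hf ⊢
  exact integral_map (by fun_prop) hf

section meanDensity

variable {σ : ℝ} {n : ℕ}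

theorem meanDensity_eq_gaussianPDFReal (hσ : 0 < σ) (hn : 0 < n) {v : ℝ≥0}
    (hv : (v : ℝ) = (σ / √n) ^ 2) (x θ : ℝ) :
    meanDensity σ n x θ = gaussianPDFReal x v θ := by
  have hn' : (0 : ℝ) < n := by exact_mod_cast hn
  have hsqrt : √(2 * π * v) = σ * √(2 * π) / √n := by
    rw [hv, sqrt_mul (by positivity), sqrt_sq (by positivity)]; ring
  rw [meanDensity, gaussianPDFReal, hsqrt, inv_div, hv, div_pow, sq_sqrt hn'.le]
  congr 2
  field_simp
  ring

theorem integral_meanDensity_mul (hσ : 0 < σ) (hn : 0 < n) {p : ℝ → ℝ} (hp : Measurable p)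
    (x : ℝ) :
    ∫ θ, meanDensity σ n x θ * p θ = ∫ u, p (x + σ / √n * u) ∂gaussianReal 0 1 := by
  obtain ⟨v, hv⟩ : ∃ v : ℝ≥0, (v : ℝ) = (σ / √n) ^ 2 := ⟨⟨_, sq_nonneg _⟩, rfl⟩
  have hv₀ : v ≠ 0 := by
    rw [← NNReal.coe_ne_zero, hv]
    have : (0 : ℝ) < n := by exact_mod_cast hn
    positivity
  rw [← integral_gaussianReal_eq_integral_comp_affine x _ hv hp.aestronglyMeasurable,
    integral_gaussianReal_eq_integral_smul hv₀]
  simp only [meanDensity_eq_gaussianPDFReal hσ hn hv, smul_eq_mul]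

theorem meanDensity_zero_mul_eq (hσ : σ ≠ 0) (hn : 0 < n) (x c : ℝ) :
    meanDensity σ n x 0 * (σ * √(2 * π) * c / √n) * exp ((√n * x / σ) ^ 2 / 2) = c := by
  have hn' : (0 : ℝ) < n := by exact_mod_cast hn
  have hexp : exp (-(n : ℝ) * (x - 0) ^ 2 / (2 * σ ^ 2)) * exp ((√n * x / σ) ^ 2 / 2) = 1 := by
    rw [← exp_add, div_pow, mul_pow, sq_sqrt hn'.le, ← exp_zero]
    congr 1
    field_simp
    ring
  have hσ' : σ * √(2 * π) ≠ 0 := by positivity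
  have hsqrt : √(n : ℝ) ≠ 0 := by positivity
  calc meanDensity σ n x 0 * (σ * √(2 * π) * c / √n) * exp ((√n * x / σ) ^ 2 / 2)
      = c * (exp (-(n : ℝ) * (x - 0) ^ 2 / (2 * σ ^ 2)) * exp ((√n * x / σ) ^ 2 / 2)) *
          (√n / √n) * (σ * √(2 * π) / (σ * √(2 * π))) := by rw [meanDensity]; ring
    _ = c := by rw [hexp, div_self hsqrt, div_self hσ']; ring

end meanDensity

theorem tendsto_zero_of_abs_le_mul_sqrt_log_div {x : ℕ → ℝ} {A : ℝ}
    (hx : ∀ n : ℕ, |x n| ≤ A * √(log n / n)) : Tendsto x atTop (𝓝 0) := by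
  have hlog : Tendsto (fun n : ℕ => log n / n) atTop (𝓝 0) :=
    isLittleO_log_id_atTop.tendsto_div_nhds_zero.comp tendsto_natCast_atTop_atTop
  have hbound : Tendsto (fun n : ℕ => A * √(log n / n)) atTop (𝓝 0) := by
    simpa using (continuous_sqrt.tendsto 0).comp hlog |>.const_mul A
  exact (tendsto_zero_iff_abs_tendsto_zero x).mpr <|
    squeeze_zero (fun n => abs_nonneg _) hx hbound

theorem tendsto_div_sqrt_natCast_atTop (σ : ℝ) : Tendsto (fun n : ℕ => σ / √n) atTop (𝓝 0) :=
  tendsto_const_nhds.div_atTop <| tendsto_sqrt_atTop.comp tendsto_natCast_atTop_atTop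

theorem bf_expansion_md_band_general (σ cpi A : ℝ) (p : ℝ → ℝ)
    (hσ : 0 < σ) (hcpi : 0 < cpi)
    (hcont : Continuous p) (h0 : p 0 = cpi)
    (hbdd : ∃ B : ℝ, ∀ θ : ℝ, |p θ| ≤ B)
    (xbar : ℕ → ℝ)
    (hx : ∀ n : ℕ, |xbar n| ≤ A * Real.sqrt (Real.log n / n)) :
    Tendsto (fun n : ℕ =>
        BF01 σ p n (xbar n) * (σ * Real.sqrt (2 * Real.pi) * cpi / Real.sqrt n) *
          Real.exp ((Real.sqrt n * xbar n / σ) ^ 2 / 2))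
      atTop (nhds 1) := by
  have hmarginal : Tendsto (fun n : ℕ => ∫ u, p (xbar n + σ / √n * u) ∂gaussianReal 0 1)
      atTop (𝓝 cpi) :=
    h0 ▸ tendsto_integral_comp_affine _ hcont hbdd
      (tendsto_zero_of_abs_le_mul_sqrt_log_div hx) (tendsto_div_sqrt_natCast_atTop σ)
  have hratio := (tendsto_const_nhds (x := cpi)).div hmarginal hcpi.ne'
  rw [div_self hcpi.ne'] at hratio
  refine hratio.congr' ?_
  filter_upwards [eventually_gt_atTop 0] with n hn
  rw [BF01, div_mul_eq_mul_div, div_mul_eq_mul_div, meanDensity_zero_mul_eq hσ.ne' hn,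
    integral_meanDensity_mul hσ hn hcont.measurable]
  rfl

/-- Uniform leading-order Bayes factor expansion on the moderate deviation band:
for `|x̄_n| ≤ A√((log n)/n)` and `t_n = √n x̄_n/σ`,
`BF₀₁(x̄_n) · (σ√(2π) c_π/√n) · e^{t_n²/2} → 1`. -/
theorem bf_expansion_md_band (σ cpi A : ℝ) (p : ℝ → ℝ)
    (hσ : 0 < σ) (hcpi : 0 < cpi) (hA : 0 < A)
    (hcont : Continuous p) (h0 : p 0 = cpi)
    (hbdd : ∃ B : ℝ, ∀ θ : ℝ, |p θ| ≤ B)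
    (xbar : ℕ → ℝ)
    (hx : ∀ n : ℕ, |xbar n| ≤ A * Real.sqrt (Real.log n / n)) :
    Tendsto (fun n : ℕ =>
        BF01 σ p n (xbar n) * (σ * Real.sqrt (2 * Real.pi) * cpi / Real.sqrt n) *
          Real.exp ((Real.sqrt n * xbar n / σ) ^ 2 / 2))
      atTop (nhds 1) :=
  bf_expansion_md_band_general σ cpi A p hσ hcpi hcont h0 hbdd xbar hx
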